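/- arXiv:2601.10654 — 2 statements merged into one kernel-verified Lean document; each statement's English description precedes it below -/
import Mathlib

section
/- Let H be a complex Hilbert space, C a unital C*-algebra, π : C → B(H) a unital *-homomorphism, δ : C → B(H) a π-derivation (δ(xy) = π(x)δ(y) + δ(x)π(y) for all x, y), and u : C → M₂(B(H)) the homomorphism u(x) = [[π(x), δ(x)], [0, π(x)]]. Suppose S is an invertible element of M₂(B(H)) such that x ↦ S u(x) S⁻¹ is a *-homomorphism. Then there exists T ∈ B(H) with ‖T‖ ≤ (‖S‖·‖S⁻¹‖)² such that δ(x) = T π(x) − π(x) T for all x ∈ C. Moreover, if N is a von Neumann algebra on H such that π and δ take values in N and all four matrix entries of S and of S⁻¹ lie in N, then T can be chosen in N. -/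
noncomputable section

open ContinuousLinearMap

variable {H : Type*} [NormedAddCommGroup H] [InnerProductSpace ℂ H] [CompleteSpace H]

/-- The `2×2` block operator `[[a, b], [c, d]]` on the Hilbert space direct sum
`H ⊕₂ H = WithLp 2 (H × H)`, identifying `M₂(B(H))` with `B(H ⊕ H)`. -/
def blk (a b c d : H →L[ℂ] H) : WithLp 2 (H × H) →L[ℂ] WithLp 2 (H × H) :=
  (WithLp.prodContinuousLinearEquiv 2 ℂ H H).symm.toContinuousLinearMap ∘L
    ((a.coprod b).prod (c.coprod d)) ∘L
    (WithLp.prodContinuousLinearEquiv 2 ℂ H H).toContinuousLinearMap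

/-- The four matrix entries of an operator on `H ⊕₂ H`, as a `2×2` matrix over `B(H)`. -/
def blkEntries (S : WithLp 2 (H × H) →L[ℂ] WithLp 2 (H × H)) :
    Matrix (Fin 2) (Fin 2) (H →L[ℂ] H) :=
  let e := WithLp.prodContinuousLinearEquiv 2 ℂ H H
  let p₁ : WithLp 2 (H × H) →L[ℂ] H := (ContinuousLinearMap.fst ℂ H H) ∘L e.toContinuousLinearMap
  let p₂ : WithLp 2 (H × H) →L[ℂ] H := (ContinuousLinearMap.snd ℂ H H) ∘L e.toContinuousLinearMap
  let i₁ : H →L[ℂ] WithLp 2 (H × H) := e.symm.toContinuousLinearMap ∘L ContinuousLinearMap.inl ℂ H H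
  let i₂ : H →L[ℂ] WithLp 2 (H × H) := e.symm.toContinuousLinearMap ∘L ContinuousLinearMap.inr ℂ H H
  !![p₁ ∘L S ∘L i₁, p₁ ∘L S ∘L i₂; p₂ ∘L S ∘L i₁, p₂ ∘L S ∘L i₂]

set_option linter.unusedSectionVars false

namespace Stmt7Aux

local notation "W" => WithLp 2 (H × H)
local notation "⟪" x ", " y "⟫" => @inner ℂ _ _ x y

def i1 : H →L[ℂ] W :=
  (WithLp.prodContinuousLinearEquiv 2 ℂ H H).symm.toContinuousLinearMap ∘L
    ContinuousLinearMap.inl ℂ H H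

def i2 : H →L[ℂ] W :=
  (WithLp.prodContinuousLinearEquiv 2 ℂ H H).symm.toContinuousLinearMap ∘L
    ContinuousLinearMap.inr ℂ H H

def p1 : W →L[ℂ] H :=
  (ContinuousLinearMap.fst ℂ H H) ∘L
    (WithLp.prodContinuousLinearEquiv 2 ℂ H H).toContinuousLinearMap

def p2 : W →L[ℂ] H :=
  (ContinuousLinearMap.snd ℂ H H) ∘L
    (WithLp.prodContinuousLinearEquiv 2 ℂ H H).toContinuousLinearMap

@[simp] lemma i1_fst (ξ : H) : (i1 ξ : W).fst = ξ := rfl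
@[simp] lemma i1_snd (ξ : H) : (i1 ξ : W).snd = 0 := rfl
@[simp] lemma i2_fst (ξ : H) : (i2 ξ : W).fst = 0 := rfl
@[simp] lemma i2_snd (ξ : H) : (i2 ξ : W).snd = ξ := rfl
@[simp] lemma p1_apply (v : W) : p1 v = v.fst := rfl
@[simp] lemma p2_apply (v : W) : p2 v = v.snd := rfl

lemma wext {v w : W} (h1 : v.fst = w.fst) (h2 : v.snd = w.snd) : v = w := by
  apply (WithLp.prodContinuousLinearEquiv 2 ℂ H H).injective
  exact Prod.ext h1 h2

lemma v_decomp (v : W) : i1 (p1 v) + i2 (p2 v) = v := by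
  apply wext <;> simp [WithLp.add_fst, WithLp.add_snd]

lemma adjoint_i1 : adjoint (i1 : H →L[ℂ] W) = p1 := by
  symm
  rw [eq_adjoint_iff]
  intro v ξ
  simp [WithLp.prod_inner_apply]

lemma adjoint_i2 : adjoint (i2 : H →L[ℂ] W) = p2 := by
  symm
  rw [eq_adjoint_iff]
  intro v ξ
  simp [WithLp.prod_inner_apply]

lemma adjoint_p1 : adjoint (p1 : W →L[ℂ] H) = i1 := by
  rw [← adjoint_i1, adjoint_adjoint]

lemma adjoint_p2 : adjoint (p2 : W →L[ℂ] H) = i2 := by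
  rw [← adjoint_i2, adjoint_adjoint]

lemma inner_p1_left (w : W) (η : H) : ⟪p1 w, η⟫ = ⟪w, i1 η⟫ := by
  rw [← adjoint_i1]; exact adjoint_inner_left _ _ _

@[simp] lemma norm_i1 (ξ : H) : ‖(i1 ξ : W)‖ = ‖ξ‖ := by
  rw [WithLp.prod_norm_eq_of_L2]
  simp

@[simp] lemma norm_i2 (ξ : H) : ‖(i2 ξ : W)‖ = ‖ξ‖ := by
  rw [WithLp.prod_norm_eq_of_L2]
  simp

lemma norm_p1_le (v : W) : ‖p1 v‖ ≤ ‖v‖ := by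
  rw [WithLp.prod_norm_eq_of_L2]
  simp only [p1_apply]
  calc ‖v.fst‖ = Real.sqrt (‖v.fst‖ ^ 2) := (Real.sqrt_sq (norm_nonneg _)).symm
  _ ≤ Real.sqrt (‖v.fst‖ ^ 2 + ‖v.snd‖ ^ 2) := Real.sqrt_le_sqrt (by nlinarith [sq_nonneg ‖v.snd‖])

-- blk applied to i1 / i2
lemma blk_i1 (a b c d : H →L[ℂ] H) (ξ : H) :
    blk a b c d (i1 ξ) = i1 (a ξ) + i2 (c ξ) := by
  apply wext <;>
    simp [blk, i1, i2, p1, p2, WithLp.add_fst, WithLp.add_snd]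

lemma blk_i2 (a b c d : H →L[ℂ] H) (ξ : H) :
    blk a b c d (i2 ξ) = i1 (b ξ) + i2 (d ξ) := by
  apply wext <;>
    simp [blk, i1, i2, p1, p2, WithLp.add_fst, WithLp.add_snd]

-- blkEntries in terms of i/p
lemma blkEntries_00 (S : W →L[ℂ] W) : blkEntries S 0 0 = p1 ∘L S ∘L i1 := rfl
lemma blkEntries_01 (S : W →L[ℂ] W) : blkEntries S 0 1 = p1 ∘L S ∘L i2 := rfl
lemma blkEntries_10 (S : W →L[ℂ] W) : blkEntries S 1 0 = p2 ∘L S ∘L i1 := rfl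
lemma blkEntries_11 (S : W →L[ℂ] W) : blkEntries S 1 1 = p2 ∘L S ∘L i2 := rfl

-- adjoints of entries
lemma star_entry11 (M : W →L[ℂ] W) :
    star (p1 ∘L M ∘L i1) = p1 ∘L adjoint M ∘L i1 := by
  rw [star_eq_adjoint, adjoint_comp, adjoint_comp, adjoint_i1, adjoint_p1, comp_assoc]

lemma star_entry21 (M : W →L[ℂ] W) :
    star (p2 ∘L M ∘L i1) = p1 ∘L adjoint M ∘L i2 := by
  rw [star_eq_adjoint, adjoint_comp, adjoint_comp, adjoint_i1, adjoint_p2, comp_assoc]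

end Stmt7Aux
set_option maxHeartbeats 1000000 in
/-- If `δ` is a `π`-derivation, `u(x) = [[π x, δ x], [0, π x]]` (viewed as operators on
`H ⊕₂ H`), and `S` is invertible in `M₂(B(H)) = B(H ⊕ H)` with `x ↦ S u(x) S⁻¹` a
`*`-homomorphism, then `δ(x) = Tπ(x) − π(x)T` for some `T` with `‖T‖ ≤ (‖S‖‖S⁻¹‖)²`;
moreover if `π`, `δ` take values in a von Neumann algebra `N` and all entries of `S` and
`S⁻¹` lie in `N`, then `T` can be chosen in `N`. -/
theorem stmt7 {C : Type*} [CStarAlgebra C]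
    (π : C →⋆ₐ[ℂ] (H →L[ℂ] H)) (δ : C →ₗ[ℂ] (H →L[ℂ] H))
    (hder : ∀ x y : C, δ (x * y) = π x * δ y + δ x * π y)
    (u : C → (WithLp 2 (H × H) →L[ℂ] WithLp 2 (H × H)))
    (hu : ∀ x : C, u x = blk (π x) (δ x) 0 (π x))
    (S Sinv : WithLp 2 (H × H) →L[ℂ] WithLp 2 (H × H))
    (hS₁ : S * Sinv = 1) (hS₂ : Sinv * S = 1)
    (hstar : ∀ x : C, adjoint (S * u x * Sinv) = S * u (star x) * Sinv) :
    (∃ T : H →L[ℂ] H, ‖T‖ ≤ (‖S‖ * ‖Sinv‖) ^ 2 ∧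
      ∀ x : C, δ x = T * π x - π x * T) ∧
    (∀ N : VonNeumannAlgebra H, (∀ x, π x ∈ N) → (∀ x, δ x ∈ N) →
      (∀ i j, blkEntries S i j ∈ N) → (∀ i j, blkEntries Sinv i j ∈ N) →
      ∃ T : H →L[ℂ] H, ‖T‖ ≤ (‖S‖ * ‖Sinv‖) ^ 2 ∧
        (∀ x : C, δ x = T * π x - π x * T) ∧ T ∈ N) := by
  classical
  open Stmt7Aux in
  rcases subsingleton_or_nontrivial H with hH | hH
  · -- trivial case
    haveI : Subsingleton (H →L[ℂ] H) :=
      ⟨fun f g => ContinuousLinearMap.ext fun x => Subsingleton.elim _ _⟩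
    refine ⟨⟨0, by rw [norm_zero]; positivity, fun x => Subsingleton.elim _ _⟩,
      fun N _ _ _ _ => ⟨0, by rw [norm_zero]; positivity, fun x => Subsingleton.elim _ _,
        zero_mem N⟩⟩
  · -- main case
    obtain ⟨ξ0, hξ0⟩ := exists_ne (0 : H)
    set A : WithLp 2 (H × H) →L[ℂ] WithLp 2 (H × H) := star S * S with hA
    have hS₁' : star Sinv * star S = 1 := by rw [← star_mul, hS₁, star_one]
    have hS₂' : star S * star Sinv = 1 := by rw [← star_mul, hS₂, star_one]
    -- the fundamental intertwining relation
    have key : ∀ x : C, star (u x) * A = A * u (star x) := by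
      intro x
      have h := hstar x
      rw [← star_eq_adjoint, star_mul, star_mul] at h
      calc star (u x) * (star S * S)
          = (star (u x) * star S) * S := (mul_assoc _ _ _).symm
        _ = ((star S * star Sinv) * (star (u x) * star S)) * S := by rw [hS₂', one_mul]
        _ = star S * ((star Sinv * (star (u x) * star S)) * S) := by
            simp only [mul_assoc]
        _ = star S * ((S * u (star x) * Sinv) * S) := by rw [h]
        _ = (star S * S) * (u (star x) * (Sinv * S)) := by simp only [mul_assoc]
        _ = (star S * S) * u (star x) := by rw [hS₂, mul_one]
    have keyI : ∀ (x : C) (v w : WithLp 2 (H × H)),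
        inner (𝕜 := ℂ) (A (u (star x) v)) w = inner (𝕜 := ℂ) (A v) (u x w) := by
      intro x v w
      calc inner (𝕜 := ℂ) (A (u (star x) v)) w
          = inner (𝕜 := ℂ) ((star (u x) * A) v) w := by rw [key x]; rfl
        _ = inner (𝕜 := ℂ) (adjoint (u x) (A v)) w := by rw [← star_eq_adjoint]; rfl
        _ = inner (𝕜 := ℂ) (A v) (u x w) := adjoint_inner_left _ _ _
    -- actions of u on i1, i2
    have u_i1 : ∀ (x : C) (ξ : H), u x (i1 ξ) = i1 (π x ξ) := by
      intro x ξ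
      rw [hu, blk_i1]
      simp
    have u_i2 : ∀ (x : C) (ξ : H), u x (i2 ξ) = i1 (δ x ξ) + i2 (π x ξ) := by
      intro x ξ
      rw [hu, blk_i2]
    -- the matrix entries of A
    set a : H →L[ℂ] H := p1 ∘L A ∘L i1 with ha
    set b : H →L[ℂ] H := p1 ∘L A ∘L i2 with hb
    have hax : ∀ ξ : H, a ξ = p1 (A (i1 ξ)) := fun ξ => rfl
    have hbx : ∀ ξ : H, b ξ = p1 (A (i2 ξ)) := fun ξ => rfl
    -- entry relations from the intertwining relation
    have E11 : ∀ y : C, a * π y = π y * a := by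
      have : ∀ x : C, a * π (star x) = π (star x) * a := by
        intro x
        ext ξ
        apply ext_inner_right ℂ
        intro η
        calc inner (𝕜 := ℂ) ((a * π (star x)) ξ) η
            = inner (𝕜 := ℂ) (p1 (A (i1 (π (star x) ξ)))) η := rfl
          _ = inner (𝕜 := ℂ) (A (i1 (π (star x) ξ))) (i1 η) := inner_p1_left _ _
          _ = inner (𝕜 := ℂ) (A (u (star x) (i1 ξ))) (i1 η) := by rw [u_i1]
          _ = inner (𝕜 := ℂ) (A (i1 ξ)) (u x (i1 η)) := keyI x _ _
          _ = inner (𝕜 := ℂ) (A (i1 ξ)) (i1 (π x η)) := by rw [u_i1]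
          _ = inner (𝕜 := ℂ) (p1 (A (i1 ξ))) (π x η) := (inner_p1_left _ _).symm
          _ = inner (𝕜 := ℂ) (adjoint (π x) (a ξ)) η := by
              rw [adjoint_inner_left, hax]
          _ = inner (𝕜 := ℂ) ((π (star x) * a) ξ) η := by
              rw [← star_eq_adjoint, ← map_star π]; rfl
      intro y
      simpa using this (star y)
    have E12 : ∀ y : C, a * δ y + b * π y = π y * b := by
      have : ∀ x : C, a * δ (star x) + b * π (star x) = π (star x) * b := by
        intro x
        ext ξ
        apply ext_inner_right ℂ
        intro η
        calc inner (𝕜 := ℂ) ((a * δ (star x) + b * π (star x)) ξ) η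
            = inner (𝕜 := ℂ) (p1 (A (i1 (δ (star x) ξ))) + p1 (A (i2 (π (star x) ξ)))) η := rfl
          _ = inner (𝕜 := ℂ) (p1 (A (i1 (δ (star x) ξ) + i2 (π (star x) ξ)))) η := by
              rw [← map_add, ← map_add]
          _ = inner (𝕜 := ℂ) (A (i1 (δ (star x) ξ) + i2 (π (star x) ξ))) (i1 η) :=
              inner_p1_left _ _
          _ = inner (𝕜 := ℂ) (A (u (star x) (i2 ξ))) (i1 η) := by rw [u_i2]
          _ = inner (𝕜 := ℂ) (A (i2 ξ)) (u x (i1 η)) := keyI x _ _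
          _ = inner (𝕜 := ℂ) (A (i2 ξ)) (i1 (π x η)) := by rw [u_i1]
          _ = inner (𝕜 := ℂ) (p1 (A (i2 ξ))) (π x η) := (inner_p1_left _ _).symm
          _ = inner (𝕜 := ℂ) (adjoint (π x) (b ξ)) η := by
              rw [adjoint_inner_left, hbx]
          _ = inner (𝕜 := ℂ) ((π (star x) * b) ξ) η := by
              rw [← star_eq_adjoint, ← map_star π]; rfl
      intro y
      simpa using this (star y)
    have E12' : ∀ y : C, a * δ y = π y * b - b * π y := by
      intro y
      have := E12 y
      linear_combination (norm := abel) this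
    -- positivity / coercivity of a
    have hSinv_pos : (0 : ℝ) < ‖Sinv‖ := by
      rcases eq_or_lt_of_le (norm_nonneg Sinv) with h0 | h0
      · exfalso
        have hz : Sinv = 0 := by
          rwa [eq_comm, norm_eq_zero] at h0
        have h1 : (1 : WithLp 2 (H × H) →L[ℂ] WithLp 2 (H × H)) = 0 := by
          rw [← hS₂, hz, zero_mul]
        have := congrArg (fun M : WithLp 2 (H × H) →L[ℂ] WithLp 2 (H × H) => M (i1 ξ0)) h1
        simp only [ContinuousLinearMap.one_apply, ContinuousLinearMap.zero_apply] at this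
        exact hξ0 (by simpa using congrArg p1 this)
      · exact h0
    have hinner_a : ∀ ξ : H,
        inner (𝕜 := ℂ) (a ξ) ξ = inner (𝕜 := ℂ) (S (i1 ξ)) (S (i1 ξ)) := by
      intro ξ
      calc inner (𝕜 := ℂ) (a ξ) ξ
          = inner (𝕜 := ℂ) (p1 (A (i1 ξ))) ξ := by rw [hax]
        _ = inner (𝕜 := ℂ) (A (i1 ξ)) (i1 ξ) := inner_p1_left _ _
        _ = inner (𝕜 := ℂ) (adjoint S (S (i1 ξ))) (i1 ξ) := by
            rw [hA, ← star_eq_adjoint]; rfl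
        _ = inner (𝕜 := ℂ) (S (i1 ξ)) (S (i1 ξ)) := adjoint_inner_left _ _ _
    have hcoer : ∀ ξ : H, ‖ξ‖ ^ 2 * (‖Sinv‖ ^ 2)⁻¹ ≤ ‖inner (𝕜 := ℂ) (a ξ) ξ‖ := by
      intro ξ
      have h1 : ‖inner (𝕜 := ℂ) (a ξ) ξ‖ = ‖S (i1 ξ)‖ ^ 2 := by
        rw [hinner_a, inner_self_eq_norm_sq_to_K, norm_pow, RCLike.norm_ofReal,
          abs_of_nonneg (norm_nonneg _)]
      have h2 : ‖ξ‖ ≤ ‖Sinv‖ * ‖S (i1 ξ)‖ := by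
        have h3 : Sinv (S (i1 ξ)) = i1 ξ := by
          have := congrArg (fun M : WithLp 2 (H × H) →L[ℂ] WithLp 2 (H × H) => M (i1 ξ)) hS₂
          simpa using this
        calc ‖ξ‖ = ‖(i1 ξ : WithLp 2 (H × H))‖ := (norm_i1 ξ).symm
          _ = ‖Sinv (S (i1 ξ))‖ := by rw [h3]
          _ ≤ ‖Sinv‖ * ‖S (i1 ξ)‖ := Sinv.le_opNorm _
      rw [h1, mul_inv_le_iff₀ (by positivity)]
      calc ‖ξ‖ ^ 2 ≤ (‖Sinv‖ * ‖S (i1 ξ)‖) ^ 2 := by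
            apply pow_le_pow_left₀ (norm_nonneg _) h2
        _ = ‖S (i1 ξ)‖ ^ 2 * ‖Sinv‖ ^ 2 := by ring
    -- invertibility of a
    have hc : (0 : NNReal) < (‖Sinv‖₊ ^ 2)⁻¹ := by
      rw [pos_iff_ne_zero]
      simp only [ne_eq, inv_eq_zero, pow_eq_zero_iff, OfNat.ofNat_ne_zero, not_false_eq_true,
        and_true]
      intro h
      rw [nnnorm_eq_zero] at h
      rw [h, norm_zero] at hSinv_pos
      exact lt_irrefl 0 hSinv_pos
    have hcast : ((((‖Sinv‖₊ ^ 2)⁻¹ : NNReal)) : ℝ) = (‖Sinv‖ ^ 2)⁻¹ := by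
      push_cast
      rfl
    have hun : IsUnit a := by
      apply ContinuousLinearMap.isUnit_of_forall_le_norm_inner_map a hc
      intro ξ
      rw [hcast]
      exact hcoer ξ
    obtain ⟨aU, haU⟩ := hun
    set ainv : H →L[ℂ] H := ((aU⁻¹ : (H →L[ℂ] H)ˣ) : H →L[ℂ] H) with hainv_def
    have ha1 : a * ainv = 1 := by rw [← haU]; exact aU.mul_inv
    have ha2 : ainv * a = 1 := by rw [← haU]; exact aU.inv_mul
    -- norm bound for ainv
    have hainv_bound : ∀ y : H, ‖ainv y‖ ≤ ‖Sinv‖ ^ 2 * ‖y‖ := by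
      intro y
      set ξ := ainv y with hξ
      have hay : a ξ = y := by
        have := congrArg (fun M : H →L[ℂ] H => M y) ha1
        simpa using this
      have h1 := hcoer ξ
      have h2 : ‖inner (𝕜 := ℂ) (a ξ) ξ‖ ≤ ‖y‖ * ‖ξ‖ := by
        rw [hay]
        exact norm_inner_le_norm _ _
      have h3 : ‖ξ‖ ^ 2 ≤ ‖y‖ * ‖ξ‖ * ‖Sinv‖ ^ 2 := by
        rw [mul_inv_le_iff₀ (by positivity)] at h1
        exact h1.trans (by nlinarith [norm_nonneg ξ, sq_nonneg ‖Sinv‖])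
      rcases eq_or_lt_of_le (norm_nonneg ξ) with h0 | h0
      · rw [← h0]; positivity
      · have h4 : ‖ξ‖ * ‖ξ‖ ≤ (‖Sinv‖ ^ 2 * ‖y‖) * ‖ξ‖ := by
          rw [← sq]; exact h3.trans_eq (by ring)
        exact le_of_mul_le_mul_right h4 h0
    have hainv_norm : ‖ainv‖ ≤ ‖Sinv‖ ^ 2 :=
      ContinuousLinearMap.opNorm_le_bound _ (by positivity) hainv_bound
    -- norm bound for b
    have hb_norm : ‖b‖ ≤ ‖S‖ ^ 2 := by
      apply ContinuousLinearMap.opNorm_le_bound _ (by positivity)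
      intro ξ
      calc ‖b ξ‖ = ‖p1 (A (i2 ξ))‖ := by rw [hbx]
        _ ≤ ‖A (i2 ξ)‖ := norm_p1_le _
        _ = ‖star S (S (i2 ξ))‖ := rfl
        _ ≤ ‖star S‖ * ‖S (i2 ξ)‖ := (star S).le_opNorm _
        _ ≤ ‖star S‖ * (‖S‖ * ‖(i2 ξ : WithLp 2 (H × H))‖) := by
            apply mul_le_mul_of_nonneg_left (S.le_opNorm _) (norm_nonneg _)
        _ = ‖S‖ ^ 2 * ‖ξ‖ := by
            have hns : ‖star S‖ = ‖S‖ := norm_star S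
            rw [hns, norm_i2]; ring
    -- ainv commutes with things commuting with a
    have hca : ∀ z : H →L[ℂ] H, z * a = a * z → z * ainv = ainv * z := by
      intro z hz
      calc z * ainv = (ainv * a) * z * ainv := by rw [ha2, one_mul]
        _ = ainv * (a * z) * ainv := by rw [mul_assoc ainv a z]
        _ = ainv * (z * a) * ainv := by rw [← hz]
        _ = ainv * z * (a * ainv) := by simp only [mul_assoc]
        _ = ainv * z := by rw [ha1, mul_one]
    -- the implementing operator
    set T : H →L[ℂ] H := -(ainv * b) with hT_def
    have hT_norm : ‖T‖ ≤ (‖S‖ * ‖Sinv‖) ^ 2 := by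
      calc ‖T‖ = ‖ainv * b‖ := norm_neg _
        _ ≤ ‖ainv‖ * ‖b‖ := norm_mul_le _ _
        _ ≤ ‖Sinv‖ ^ 2 * ‖S‖ ^ 2 := by
            apply mul_le_mul hainv_norm hb_norm (norm_nonneg _) (by positivity)
        _ = (‖S‖ * ‖Sinv‖) ^ 2 := by ring
    have hT_der : ∀ y : C, δ y = T * π y - π y * T := by
      intro y
      have h2 : ainv * π y = π y * ainv := (hca (π y) (E11 y).symm).symm
      calc δ y = (ainv * a) * δ y := by rw [ha2, one_mul]
        _ = ainv * (a * δ y) := mul_assoc _ _ _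
        _ = ainv * (π y * b - b * π y) := by rw [E12']
        _ = ainv * (π y * b) - ainv * (b * π y) := mul_sub _ _ _
        _ = (ainv * π y) * b - (ainv * b) * π y := by rw [mul_assoc, mul_assoc]
        _ = π y * (ainv * b) - (ainv * b) * π y := by rw [h2, mul_assoc]
        _ = T * π y - π y * T := by rw [hT_def]; noncomm_ring
    refine ⟨⟨T, hT_norm, hT_der⟩, fun N hN1 hN2 hNS _ => ⟨T, hT_norm, hT_der, ?_⟩⟩
    -- membership in the von Neumann algebra
    have hE00 : p1 ∘L S ∘L i1 ∈ N := by rw [← blkEntries_00]; exact hNS 0 0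
    have hE01 : p1 ∘L S ∘L i2 ∈ N := by rw [← blkEntries_01]; exact hNS 0 1
    have hE10 : p2 ∘L S ∘L i1 ∈ N := by rw [← blkEntries_10]; exact hNS 1 0
    have hE11 : p2 ∘L S ∘L i2 ∈ N := by rw [← blkEntries_11]; exact hNS 1 1
    have hadec : a = star (p1 ∘L S ∘L i1) * (p1 ∘L S ∘L i1)
        + star (p2 ∘L S ∘L i1) * (p2 ∘L S ∘L i1) := by
      ext ξ
      have hw := v_decomp (S (i1 ξ))
      calc a ξ = p1 (star S (S (i1 ξ))) := rfl
        _ = p1 (star S (i1 (p1 (S (i1 ξ))) + i2 (p2 (S (i1 ξ))))) := by rw [hw]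
        _ = p1 (star S (i1 (p1 (S (i1 ξ))))) + p1 (star S (i2 (p2 (S (i1 ξ))))) := by
            rw [map_add, map_add]
        _ = (star (p1 ∘L S ∘L i1) * (p1 ∘L S ∘L i1)
            + star (p2 ∘L S ∘L i1) * (p2 ∘L S ∘L i1)) ξ := by
            rw [star_entry11, star_entry21]
            rfl
    have hbdec : b = star (p1 ∘L S ∘L i1) * (p1 ∘L S ∘L i2)
        + star (p2 ∘L S ∘L i1) * (p2 ∘L S ∘L i2) := by
      ext ξ
      have hw := v_decomp (S (i2 ξ))
      calc b ξ = p1 (star S (S (i2 ξ))) := rfl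
        _ = p1 (star S (i1 (p1 (S (i2 ξ))) + i2 (p2 (S (i2 ξ))))) := by rw [hw]
        _ = p1 (star S (i1 (p1 (S (i2 ξ))))) + p1 (star S (i2 (p2 (S (i2 ξ))))) := by
            rw [map_add, map_add]
        _ = (star (p1 ∘L S ∘L i1) * (p1 ∘L S ∘L i2)
            + star (p2 ∘L S ∘L i1) * (p2 ∘L S ∘L i2)) ξ := by
            rw [star_entry11, star_entry21]
            rfl
    have haN : a ∈ N := by
      rw [hadec]
      exact add_mem (mul_mem (star_mem hE00) hE00) (mul_mem (star_mem hE10) hE10)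
    have hbN : b ∈ N := by
      rw [hbdec]
      exact add_mem (mul_mem (star_mem hE00) hE01) (mul_mem (star_mem hE10) hE11)
    have hainvN : ainv ∈ N := by
      rw [← N.commutant_commutant]
      rw [VonNeumannAlgebra.mem_commutant_iff]
      intro g hg
      have hga : a * g = g * a := VonNeumannAlgebra.mem_commutant_iff.mp hg a haN
      exact hca g hga.symm
    rw [hT_def]
    exact neg_mem (mul_mem hainvN hbN)
end
end

section
/- Let H be a complex Hilbert space, Ω ∈ H a unit vector, and A ⊆ B(H) a set of operators such that ‖a Ω‖ = ‖a* Ω‖ for every a ∈ A. Let n ≥ 1 and let r₁,…,rₙ, z₁,…,zₙ ∈ B(H) satisfy: (i) the vectors r₁Ω,…,rₙΩ form an orthonormal family in H; (ii) rⱼ*Ω = 0 for every j; (iii) rⱼ + zⱼ ∈ A and rⱼ* − zⱼ ∈ A for every j. Then √n ≤ ‖Σⱼ zⱼ zⱼ*‖^{1/2} + ‖Σⱼ zⱼ* zⱼ‖^{1/2}. -/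
open ContinuousLinearMap

/-! Since `‖rⱼ Ω‖ = 1` and `rⱼ* Ω = 0`, the condition on `A` applied to `rⱼ + zⱼ` gives
`1 = ‖rⱼ Ω‖ ≤ ‖(rⱼ + zⱼ) Ω‖ + ‖zⱼ Ω‖ = ‖zⱼ* Ω‖ + ‖zⱼ Ω‖`. Summing over `j` and applying
Cauchy–Schwarz, `n ≤ √n (∑ ‖zⱼ* Ω‖²)^(1/2) + √n (∑ ‖zⱼ Ω‖²)^(1/2)`, and the two sums of squares
are `⟨Ω, ∑ zⱼ zⱼ* Ω⟩` and `⟨Ω, ∑ zⱼ* zⱼ Ω⟩`, bounded by the operator norms. -/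

theorem Finset.sum_le_sqrt_card_mul_sqrt_sum_sq {ι : Type*} (s : Finset ι) (f : ι → ℝ) :
    ∑ i ∈ s, f i ≤ √(s.card : ℝ) * √(∑ i ∈ s, f i ^ 2) := by
  rw [← Real.sqrt_mul (Nat.cast_nonneg _)]
  exact (le_abs_self _).trans (Real.abs_le_sqrt (sq_sum_le_card_mul_sum_sq))

namespace ContinuousLinearMap

variable {𝕜 E F : Type*} [RCLike 𝕜]
  [NormedAddCommGroup E] [InnerProductSpace 𝕜 E] [CompleteSpace E]
  [NormedAddCommGroup F] [InnerProductSpace 𝕜 F] [CompleteSpace F]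

theorem sum_norm_apply_sq_le {ι : Type*} (s : Finset ι) (T : ι → E →L[𝕜] F) (x : E) :
    ∑ i ∈ s, ‖T i x‖ ^ 2 ≤ ‖∑ i ∈ s, adjoint (T i) ∘L T i‖ * ‖x‖ ^ 2 := by
  set S := ∑ i ∈ s, adjoint (T i) ∘L T i
  calc ∑ i ∈ s, ‖T i x‖ ^ 2 = RCLike.re (inner 𝕜 x (S x)) := by
        simp only [S, sum_apply, inner_sum, map_sum, apply_norm_sq_eq_inner_adjoint_right]
    _ ≤ ‖x‖ * ‖S x‖ := (RCLike.re_le_norm _).trans (norm_inner_le_norm _ _)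
    _ ≤ ‖x‖ * (‖S‖ * ‖x‖) := by gcongr; exact le_opNorm S x
    _ = ‖S‖ * ‖x‖ ^ 2 := by ring

theorem sum_norm_apply_le_of_norm_eq_one {ι : Type*} (s : Finset ι) (T : ι → E →L[𝕜] F)
    {x : E} (hx : ‖x‖ = 1) :
    ∑ i ∈ s, ‖T i x‖ ≤ √(s.card : ℝ) * √‖∑ i ∈ s, adjoint (T i) ∘L T i‖ := by
  refine (s.sum_le_sqrt_card_mul_sqrt_sum_sq _).trans ?_
  gcongr
  simpa [hx] using sum_norm_apply_sq_le s T x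

theorem norm_apply_le_norm_adjoint_apply_add_norm_apply {r z : E →L[𝕜] E} {x : E}
    (hr : adjoint r x = 0) (hrz : ‖(r + z) x‖ = ‖adjoint (r + z) x‖) :
    ‖r x‖ ≤ ‖adjoint z x‖ + ‖z x‖ :=
  calc ‖r x‖ = ‖(r + z) x - z x‖ := by rw [add_apply, add_sub_cancel_right]
    _ ≤ ‖(r + z) x‖ + ‖z x‖ := norm_sub_le _ _
    _ = ‖adjoint z x‖ + ‖z x‖ := by rw [hrz, map_add, add_apply, hr, zero_add]

end ContinuousLinearMap

theorem le_of_mul_self_le_mul {s t : ℝ} (ht : 0 ≤ t) (h : s * s ≤ s * t) :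
    s ≤ t := by
  nlinarith

theorem stmt10_general {H : Type*} [NormedAddCommGroup H] [InnerProductSpace ℂ H] [CompleteSpace H]
    (Ω : H) (hΩ : ‖Ω‖ = 1) (A : Set (H →L[ℂ] H))
    (hA : ∀ a ∈ A, ‖a Ω‖ = ‖adjoint a Ω‖)
    (n : ℕ) (r z : Fin n → (H →L[ℂ] H))
    (horth : Orthonormal ℂ (fun j => r j Ω))
    (hr : ∀ j, adjoint (r j) Ω = 0)
    (hrz : ∀ j, r j + z j ∈ A ∧ adjoint (r j) - z j ∈ A) :
    Real.sqrt n ≤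
      Real.sqrt ‖∑ j, z j * adjoint (z j)‖ + Real.sqrt ‖∑ j, adjoint (z j) * z j‖ := by
  have hone : ∀ j, 1 ≤ ‖adjoint (z j) Ω‖ + ‖z j Ω‖ := fun j =>
    horth.1 j ▸ norm_apply_le_norm_adjoint_apply_add_norm_apply (hr j) (hA _ (hrz j).1)
  have hadj := sum_norm_apply_le_of_norm_eq_one Finset.univ (fun j => adjoint (z j)) hΩ
  have hz := sum_norm_apply_le_of_norm_eq_one Finset.univ z hΩ
  simp only [adjoint_adjoint, Finset.card_univ, Fintype.card_fin] at hadj hz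
  refine le_of_mul_self_le_mul (by positivity) ?_
  calc √(n : ℝ) * √n = ∑ _j : Fin n, (1 : ℝ) := by simp
    _ ≤ ∑ j, (‖adjoint (z j) Ω‖ + ‖z j Ω‖) := Finset.sum_le_sum fun j _ => hone j
    _ ≤ √n * √‖∑ j, z j * adjoint (z j)‖ + √n * √‖∑ j, adjoint (z j) * z j‖ := by
      rw [Finset.sum_add_distrib]; exact add_le_add hadj hz
    _ = _ := by ring

/-- If `Ω` is a unit vector, `A ⊆ B(H)` is a set of operators with `‖a Ω‖ = ‖a* Ω‖` for
`a ∈ A`, the vectors `rⱼ Ω` are orthonormal, `rⱼ* Ω = 0`, and `rⱼ + zⱼ, rⱼ* − zⱼ ∈ A`,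
then `√n ≤ ‖∑ zⱼ zⱼ*‖^(1/2) + ‖∑ zⱼ* zⱼ‖^(1/2)`. -/
theorem stmt10 {H : Type*} [NormedAddCommGroup H] [InnerProductSpace ℂ H] [CompleteSpace H]
    (Ω : H) (hΩ : ‖Ω‖ = 1) (A : Set (H →L[ℂ] H))
    (hA : ∀ a ∈ A, ‖a Ω‖ = ‖adjoint a Ω‖)
    (n : ℕ) (hn : 1 ≤ n) (r z : Fin n → (H →L[ℂ] H))
    (horth : Orthonormal ℂ (fun j => r j Ω))
    (hr : ∀ j, adjoint (r j) Ω = 0)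
    (hrz : ∀ j, r j + z j ∈ A ∧ adjoint (r j) - z j ∈ A) :
    Real.sqrt n ≤
      Real.sqrt ‖∑ j, z j * adjoint (z j)‖ + Real.sqrt ‖∑ j, adjoint (z j) * z j‖ :=
  stmt10_general Ω hΩ A hA n r z horth hr hrz
end
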